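/- The sequence f_poa(j) = (j−1)! · (Σ_{ℓ=j}^∞ 1/ℓ!) / (e−1) is nonincreasing in j and tends to 0 as j → ∞. -/

import Mathlib

/-- f_poa(j) = (j−1)! · (Σ_{ℓ=j}^∞ 1/ℓ!) / (e−1). -/
noncomputable def fpoa (j : ℕ) : ℝ :=
  ((j - 1).factorial : ℝ) * (∑' ℓ : ℕ, (1 : ℝ) / (j + ℓ).factorial) / (Real.exp 1 - 1)

lemma fpoa_summable (j : ℕ) : Summable (fun ℓ : ℕ => (1:ℝ) / (j + ℓ).factorial) := by
  have h : Summable (fun n : ℕ => (1:ℝ) / n.factorial) := by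
    simpa using Real.summable_pow_div_factorial 1
  have := (summable_nat_add_iff j).2 h
  exact this.congr (fun ℓ => by rw [add_comm])

lemma fpoa_tsum_nonneg (j : ℕ) : 0 ≤ ∑' ℓ : ℕ, (1:ℝ) / (j + ℓ).factorial :=
  tsum_nonneg (fun ℓ => by positivity)

lemma fpoa_tsum_bound (j : ℕ) (hj : 1 ≤ j) :
    (∑' ℓ : ℕ, (1:ℝ) / (j + ℓ).factorial) ≤ 2 / j.factorial := by
  have hgeom : Summable (fun ℓ : ℕ => ((1:ℝ)/2)^ℓ) :=
    summable_geometric_of_lt_one (by norm_num) (by norm_num)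
  have hs2 : Summable (fun ℓ : ℕ => (1:ℝ) / j.factorial * (1/2)^ℓ) := hgeom.mul_left _
  have hle : ∀ ℓ : ℕ, (1:ℝ) / (j + ℓ).factorial ≤ 1 / j.factorial * (1/2)^ℓ := by
    intro ℓ
    have h1 : (j.factorial * 2^ℓ : ℕ) ≤ (j + ℓ).factorial :=
      le_trans (Nat.mul_le_mul_left _ (Nat.pow_le_pow_left (by omega) ℓ))
        Nat.factorial_mul_pow_le_factorial
    have h1' : ((j.factorial * 2^ℓ : ℕ) : ℝ) ≤ ((j+ℓ).factorial : ℝ) := by exact_mod_cast h1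
    have h2 : (1:ℝ) / (j + ℓ).factorial ≤ 1 / (j.factorial * 2^ℓ : ℕ) :=
      one_div_le_one_div_of_le (by positivity) h1'
    calc (1:ℝ) / (j + ℓ).factorial ≤ 1 / (j.factorial * 2^ℓ : ℕ) := h2
      _ = 1 / j.factorial * (1/2)^ℓ := by
          push_cast
          rw [one_div_pow, div_mul_div_comm, one_mul]
  have := Summable.tsum_le_tsum hle (fpoa_summable j) hs2
  calc (∑' ℓ : ℕ, (1:ℝ) / (j + ℓ).factorial)
      ≤ ∑' ℓ : ℕ, (1:ℝ) / j.factorial * (1/2)^ℓ := this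
    _ = 1 / j.factorial * ∑' ℓ : ℕ, ((1:ℝ)/2)^ℓ := tsum_mul_left
    _ = 2 / j.factorial := by
        rw [tsum_geometric_of_lt_one (by norm_num) (by norm_num)]
        norm_num
        ring

lemma fpoa_e_pos : (0:ℝ) < Real.exp 1 - 1 := by
  have := Real.exp_one_gt_d9
  linarith

theorem fpoa_antitone_tendsto_zero :
    (∀ j : ℕ, 1 ≤ j → fpoa (j + 1) ≤ fpoa j) ∧
      Filter.Tendsto fpoa Filter.atTop (nhds 0) := by
  constructor
  · intro j hj
    obtain ⟨k, rfl⟩ : ∃ k, j = k + 1 := ⟨j - 1, by omega⟩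
    unfold fpoa
    apply div_le_div_of_nonneg_right ?_ fpoa_e_pos.le
    simp only [Nat.add_sub_cancel]
    have key : ((k+1:ℕ):ℝ) * (∑' ℓ : ℕ, (1:ℝ) / (k + 1 + 1 + ℓ).factorial)
        ≤ ∑' ℓ : ℕ, (1:ℝ) / (k + 1 + ℓ).factorial := by
      rw [← tsum_mul_left]
      apply Summable.tsum_le_tsum ?_ ((fpoa_summable (k+2)).mul_left _) (fpoa_summable (k+1))
      intro ℓ
      rw [mul_one_div, div_le_div_iff₀ (by positivity) (by positivity), one_mul]
      have : (k + 1 + 1 + ℓ).factorial = (k + 1 + 1 + ℓ) * (k + 1 + ℓ).factorial := by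
        rw [show k + 1 + 1 + ℓ = (k + 1 + ℓ) + 1 by ring, Nat.factorial_succ]
      rw [this]
      push_cast
      nlinarith [(by positivity : (0:ℝ) ≤ ((k + 1 + ℓ).factorial : ℝ)),
        (by positivity : (0:ℝ) ≤ ((ℓ:ℝ)))]
    have hfact : ((k+1).factorial : ℝ) = (k+1) * k.factorial := by
      rw [Nat.factorial_succ]; push_cast; ring
    calc ((k+1).factorial : ℝ) * (∑' ℓ : ℕ, (1:ℝ) / (k + 1 + 1 + ℓ).factorial)
        = (k.factorial : ℝ) * (((k+1:ℕ):ℝ) * (∑' ℓ : ℕ, (1:ℝ) / (k + 1 + 1 + ℓ).factorial)) := by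
          rw [hfact]; push_cast; ring
      _ ≤ (k.factorial : ℝ) * (∑' ℓ : ℕ, (1:ℝ) / (k + 1 + ℓ).factorial) := by
          apply mul_le_mul_of_nonneg_left key (by positivity)
  · apply squeeze_zero' (g := fun n : ℕ => (2 / (Real.exp 1 - 1)) * (1 / n))
    · filter_upwards with n
      unfold fpoa
      have := fpoa_tsum_nonneg n
      have := fpoa_e_pos
      positivity
    · rw [Filter.eventually_atTop]
      refine ⟨1, fun n hn => ?_⟩
      obtain ⟨k, rfl⟩ : ∃ k, n = k + 1 := ⟨n - 1, by omega⟩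
      unfold fpoa
      simp only [Nat.add_sub_cancel]
      have hb := fpoa_tsum_bound (k+1) (by omega)
      have hfp : (0:ℝ) < (k.factorial : ℝ) := by positivity
      have hfact : ((k+1).factorial : ℝ) = (k+1) * k.factorial := by
        rw [Nat.factorial_succ]; push_cast; ring
      have h1 : (k.factorial : ℝ) * (∑' ℓ : ℕ, (1:ℝ) / (k + 1 + ℓ).factorial)
          ≤ (k.factorial : ℝ) * (2 / (k+1).factorial) :=
        mul_le_mul_of_nonneg_left hb (le_of_lt hfp)
      have h2 : (k.factorial : ℝ) * (2 / (k+1).factorial) = 2 / (k+1 : ℝ) := by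
        rw [hfact]
        field_simp
      rw [div_le_iff₀ fpoa_e_pos]
      calc (k.factorial : ℝ) * (∑' ℓ : ℕ, (1:ℝ) / (k + 1 + ℓ).factorial)
          ≤ 2 / (k+1 : ℝ) := by rw [← h2]; exact h1
        _ = 2 / (Real.exp 1 - 1) * (1 / ((k:ℝ)+1)) * (Real.exp 1 - 1) := by
            have he := ne_of_gt fpoa_e_pos
            field_simp
        _ = 2 / (Real.exp 1 - 1) * (1 / ((k+1 : ℕ):ℝ)) * (Real.exp 1 - 1) := by
            push_cast; ring
    · have := tendsto_one_div_atTop_nhds_zero_nat.const_mul (2 / (Real.exp 1 - 1))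
      simpa using this
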